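/- arXiv:1706.03276 — 3 statements merged into one kernel-verified Lean document; each statement's English description precedes it below -/
import Mathlib

section
/- A partial order ≤ on a set X is a semiorder if and only if for every pair of incomparable elements a, b of X, either the pair (a,b) or the pair (b,a) is critical, where a pair (x,y) of incomparable elements is critical if D(x) ⊆ D(y) and U(y) ⊆ U(x), with D(u) = {v ∈ X : v < u} and U(u) = {v ∈ X : u < v}. -/
namespace ThrPaper

universe u

variable {X : Type*}

/-- The strict order associated to a reflexive relation `le`. -/
def Lt (le : X → X → Prop) (x y : X) : Prop := le x y ∧ ¬ le y x

/-- `x` and `y` are incomparable with respect to `le`. -/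
def Incomp (le : X → X → Prop) (x y : X) : Prop := ¬ le x y ∧ ¬ le y x

/-- `le` is a partial order (reflexive, transitive, antisymmetric). -/
def IsPartialOrderRel (le : X → X → Prop) : Prop :=
  (∀ x, le x x) ∧ (∀ x y z, le x y → le y z → le x z) ∧ ∀ x y, le x y → le y x → x = y

/-- `le` is total. -/
def IsTotalRel (le : X → X → Prop) : Prop := ∀ x y, le x y ∨ le y x

/-- Compatibility of a relation with the (not necessarily abelian) group operation. -/
def IsCompat {G : Type*} [AddGroup G] (le : G → G → Prop) : Prop :=
  ∀ a b x y : G, le x y → le (a + x + b) (a + y + b)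

/-- The trace quasi-order `≤_pred`: `x ≤_pred y` iff every `z < x` satisfies `z < y`. -/
def PredLe (le : X → X → Prop) (x y : X) : Prop := ∀ z, Lt le z x → Lt le z y

/-- The trace quasi-order `≤_succ`: `x ≤_succ y` iff every `z > y` satisfies `z > x`. -/
def SuccLe (le : X → X → Prop) (x y : X) : Prop := ∀ z, Lt le y z → Lt le x z

/-- `le` is a threshold order: `≤_pred` and `≤_succ` are equal and are total orders. -/
def IsThresholdOrder (le : X → X → Prop) : Prop :=
  (∀ x y, PredLe le x y ↔ SuccLe le x y) ∧
  (∀ x y, PredLe le x y ∨ PredLe le y x) ∧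
  ∀ x y, PredLe le x y → PredLe le y x → x = y

/-- The poset `2 ⊕ 2` embeds into `le`. -/
def Embeds2p2 (le : X → X → Prop) : Prop :=
  ∃ a b c d : X, Lt le a b ∧ Lt le c d ∧
    Incomp le a c ∧ Incomp le a d ∧ Incomp le b c ∧ Incomp le b d

/-- The poset `3 ⊕ 1` embeds into `le`. -/
def Embeds3p1 (le : X → X → Prop) : Prop :=
  ∃ a b c d : X, Lt le a b ∧ Lt le b c ∧ Incomp le d a ∧ Incomp le d b ∧ Incomp le d c

/-- The poset `1 ⊕ 2` embeds into `le`. -/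
def Embeds1p2 (le : X → X → Prop) : Prop :=
  ∃ a b c : X, Lt le a b ∧ Incomp le c a ∧ Incomp le c b

/-- A pair `(x, y)` of incomparable elements is critical if `D(x) ⊆ D(y)` and `U(y) ⊆ U(x)`,
where `D(u) = {v | v < u}` and `U(u) = {v | u < v}`. -/
def Critical (le : X → X → Prop) (x y : X) : Prop :=
  Incomp le x y ∧ (∀ v, Lt le v x → Lt le v y) ∧ ∀ v, Lt le y v → Lt le x v

/-! If neither `(a, b)` nor `(b, a)` is critical, each failure is witnessed by an element below one
of `a, b` or above the other and incomparable to it; the four combinations of witnesses produce a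
`2 ⊕ 2` (both below or both above) or a `3 ⊕ 1` (one below, one above). Conversely, applying the
criticality of a suitable incomparable pair to a copy of `2 ⊕ 2` or `3 ⊕ 1` forces a comparability
that the copy forbids. -/

theorem Incomp.symm {le : X → X → Prop} {x y : X} (h : Incomp le x y) : Incomp le y x :=
  ⟨h.2, h.1⟩

theorem not_embeds2p2_of_critical {le : X → X → Prop}
    (hcrit : ∀ a b, Incomp le a b → Critical le a b ∨ Critical le b a) : ¬ Embeds2p2 le := by
  rintro ⟨a, b, c, d, hab, hcd, hac, had, hbc, -⟩
  rcases hcrit a c hac with h | h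
  · exact had.1 (h.2.2 d hcd).1
  · exact hbc.2 (h.2.2 b hab).1

theorem not_embeds3p1_of_critical {le : X → X → Prop}
    (hcrit : ∀ a b, Incomp le a b → Critical le a b ∨ Critical le b a) : ¬ Embeds3p1 le := by
  rintro ⟨a, b, c, d, hab, hbc, hda, hdb, hdc⟩
  rcases hcrit d b hdb with h | h
  · exact hdc.1 (h.2.2 c hbc).1
  · exact hda.2 (h.2.1 a hab).1

section Transitive

variable {le : X → X → Prop} [IsTrans X le] {a b u v w : X}

theorem incomp_of_lt_of_incomp (hva : Lt le v a) (hab : Incomp le a b) (hvb : ¬ Lt le v b) :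
    Incomp le v b :=
  have hbv : ¬ le b v := fun h => hab.2 (trans_of le h hva.1)
  ⟨fun h => hvb ⟨h, hbv⟩, hbv⟩

theorem incomp_of_incomp_of_lt (hab : Incomp le a b) (hbu : Lt le b u) (hau : ¬ Lt le a u) :
    Incomp le a u :=
  have hua : ¬ le u a := fun h => hab.2 (trans_of le hbu.1 h)
  ⟨fun h => hau ⟨h, hua⟩, hua⟩

theorem exists_incomp_of_not_critical (hab : Incomp le a b) (h : ¬ Critical le a b) :
    (∃ v, Lt le v a ∧ Incomp le v b) ∨ ∃ u, Lt le b u ∧ Incomp le a u := by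
  simp only [Critical, hab, true_and, not_and_or, not_forall] at h
  rcases h with ⟨v, hva, hvb⟩ | ⟨u, hbu, hau⟩
  · exact .inl ⟨v, hva, incomp_of_lt_of_incomp hva hab hvb⟩
  · exact .inr ⟨u, hbu, incomp_of_incomp_of_lt hab hbu hau⟩

theorem embeds2p2_of_lt_of_lt (hab : Incomp le a b) (hva : Lt le v a) (hvb : Incomp le v b)
    (hwb : Lt le w b) (hwa : Incomp le w a) : Embeds2p2 le :=
  have hvw : Incomp le v w :=
    ⟨fun h => hvb.1 (trans_of le h hwb.1), fun h => hwa.1 (trans_of le h hva.1)⟩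
  ⟨v, a, w, b, hva, hwb, hvw, hvb, hwa.symm, hab⟩

theorem embeds2p2_of_gt_of_gt (hab : Incomp le a b) (haw : Lt le a w) (hbw : Incomp le b w)
    (hbu : Lt le b u) (hau : Incomp le a u) : Embeds2p2 le :=
  have hwu : Incomp le w u :=
    ⟨fun h => hau.1 (trans_of le haw.1 h), fun h => hbw.1 (trans_of le hbu.1 h)⟩
  ⟨a, w, b, u, haw, hbu, hab, hau, hbw.symm, hwu⟩

theorem embeds_of_not_critical (hab : Incomp le a b) (hab' : ¬ Critical le a b)
    (hba' : ¬ Critical le b a) : Embeds2p2 le ∨ Embeds3p1 le := by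
  rcases exists_incomp_of_not_critical hab hab' with ⟨v, hva, hvb⟩ | ⟨u, hbu, hau⟩ <;>
    rcases exists_incomp_of_not_critical hab.symm hba' with ⟨w, hwb, hwa⟩ | ⟨w, haw, hbw⟩
  · exact .inl (embeds2p2_of_lt_of_lt hab hva hvb hwb hwa)
  · exact .inr ⟨v, a, w, b, hva, haw, hvb.symm, hab.symm, hbw⟩
  · exact .inr ⟨w, b, u, a, hwb, hbu, hwa.symm, hab, hau⟩
  · exact .inl (embeds2p2_of_gt_of_gt hab haw hbw hbu hau)

end Transitive

/-- A partial order is a semiorder iff for every incomparable pair `a, b`,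
the pair `(a, b)` or the pair `(b, a)` is critical. -/
theorem semiorder_iff_critical_pairs {X : Type*} (le : X → X → Prop)
    (hpo : IsPartialOrderRel le) :
    (¬ Embeds2p2 le ∧ ¬ Embeds3p1 le) ↔
      ∀ a b : X, Incomp le a b → (Critical le a b ∨ Critical le b a) := by
  have : IsTrans X le := ⟨hpo.2.1⟩
  refine ⟨fun ⟨h22, h31⟩ a b hab => ?_,
    fun h => ⟨not_embeds2p2_of_critical h, not_embeds3p1_of_critical h⟩⟩
  by_contra! h
  rcases embeds_of_not_critical hab h.1 h.2 with h2p2 | h3p1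
  exacts [h22 h2p2, h31 h3p1]

end ThrPaper
end

section
/- Every nontrivial torsion-free abelian group can be equipped with a compatible threshold order which is not a total order. -/
/-!
A torsion-free abelian group `G` embeds into its divisible hull, a `ℚ`-vector space, so ordering
coordinates in a basis lexicographically makes `G` a linearly ordered group. Fix `w > 0` and declare
`x` below `y` when `x = y` or `x + 2w ≤ y`. Both trace orders of this relation are the linear order
itself, so it is a compatible threshold order, yet `0` and `w` are incomparable.
-/

namespace ThrPaper

universe u

variable {X : Type*}

theorem exists_linearOrder_isOrderedAddMonoid_of_isAddTorsionFree (G : Type*) [AddCommGroup G]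
    [IsAddTorsionFree G] : ∃ _ : LinearOrder G, IsOrderedAddMonoid G := by
  let b := Module.Free.chooseBasis ℚ (DivisibleHull G)
  let _ : LinearOrder (Module.Free.ChooseBasisIndex ℚ (DivisibleHull G)) :=
    IsWellOrder.linearOrder WellOrderingRel
  let f : G →+ Lex (Module.Free.ChooseBasisIndex ℚ (DivisibleHull G) →₀ ℚ) :=
    (toLexAddEquiv _).toAddMonoidHom.comp
      (b.repr.toAddMonoidHom.comp (DivisibleHull.coeAddMonoidHom G))
  have hf : Function.Injective f :=
    (toLexAddEquiv _).injective.comp (b.repr.injective.comp DivisibleHull.coe_injective)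
  let _ := LinearOrder.lift' f hf
  exact ⟨_, Function.Injective.isOrderedAddMonoid f (map_add f) Iff.rfl⟩

section Threshold

variable {G : Type*} [AddCommGroup G] [LinearOrder G] [IsOrderedAddMonoid G] {u : G}

def thresholdRel (u : G) (x y : G) : Prop := x = y ∨ x + u ≤ y

theorem isPartialOrderRel_thresholdRel (hu : 0 ≤ u) : IsPartialOrderRel (thresholdRel u) := by
  have le_of_gap {x y : G} (h : x + u ≤ y) : x ≤ y := (le_add_of_nonneg_right hu).trans h
  refine ⟨fun x => .inl rfl, ?_, ?_⟩
  · rintro x y z (rfl | hxy) (rfl | hyz)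
    exacts [.inl rfl, .inr hyz, .inr hxy, .inr (hxy.trans (le_of_gap hyz))]
  · rintro x y (rfl | hxy) (h | hyx)
    exacts [rfl, rfl, h.symm, (le_of_gap hxy).antisymm (le_of_gap hyx)]

theorem isCompat_thresholdRel (u : G) : IsCompat (thresholdRel u) := by
  rintro a b x y (rfl | h)
  · exact .inl rfl
  · exact .inr (by grw [← h]; exact le_of_eq (by abel))

theorem lt_thresholdRel_iff (hu : 0 < u) {x y : G} : Lt (thresholdRel u) x y ↔ x + u ≤ y := by
  constructor
  · rintro ⟨rfl | h, hyx⟩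
    exacts [absurd (.inl rfl) hyx, h]
  · refine fun h => ⟨.inr h, ?_⟩
    rintro (rfl | hyx)
    · exact (lt_add_of_pos_right y hu).not_ge h
    · exact (lt_add_of_pos_right x hu).not_ge (h.trans ((le_add_of_nonneg_right hu.le).trans hyx))

theorem predLe_thresholdRel_iff (hu : 0 < u) {x y : G} : PredLe (thresholdRel u) x y ↔ x ≤ y := by
  simp only [PredLe, lt_thresholdRel_iff hu]
  exact ⟨fun h => by simpa using h (x - u) (by simp), fun hxy z hz => hz.trans hxy⟩

theorem succLe_thresholdRel_iff (hu : 0 < u) {x y : G} : SuccLe (thresholdRel u) x y ↔ x ≤ y := by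
  simp only [SuccLe, lt_thresholdRel_iff hu]
  exact ⟨fun h => by simpa using h (y + u) le_rfl,
    fun hxy z hz => (add_le_add_left hxy u).trans hz⟩

theorem isThresholdOrder_thresholdRel (hu : 0 < u) : IsThresholdOrder (thresholdRel u) := by
  simp only [IsThresholdOrder, predLe_thresholdRel_iff hu, succLe_thresholdRel_iff hu, iff_self]
  exact ⟨fun _ _ => trivial, le_total, fun _ _ => le_antisymm⟩

theorem not_isTotalRel_thresholdRel {w : G} (hw : 0 < w) (hwu : w < u) :
    ¬ IsTotalRel (thresholdRel u) := by
  intro htot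
  rcases htot 0 w with (h | h) | (h | h)
  · exact hw.ne h
  · exact hwu.not_ge (by simpa using h)
  · exact hw.ne' h
  · exact (add_pos hw (hw.trans hwu)).not_ge h

end Threshold

/-- Every nontrivial torsion-free abelian group can be equipped with a
compatible threshold order which is not a total order. -/
theorem torsionFree_abelian_has_threshold_not_total (G : Type*) [AddCommGroup G]
    (hnt : ∃ x : G, x ≠ 0)
    (htf : ∀ (n : ℕ) (x : G), 0 < n → n • x = 0 → x = 0) :
    ∃ le : G → G → Prop,
      IsPartialOrderRel le ∧ IsCompat le ∧ IsThresholdOrder le ∧ ¬ IsTotalRel le := by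
  have : IsAddTorsionFree G := ⟨fun n hn x y hxy => sub_eq_zero.1 <|
    htf n _ (Nat.pos_of_ne_zero hn) (by rw [nsmul_sub, sub_eq_zero]; exact hxy)⟩
  obtain ⟨_, _⟩ := exists_linearOrder_isOrderedAddMonoid_of_isAddTorsionFree G
  obtain ⟨x, hx⟩ := hnt
  have : Nontrivial G := nontrivial_of_ne x 0 hx
  obtain ⟨w, hw⟩ := exists_zero_lt (α := G)
  have hu : 0 < w + w := add_pos hw hw
  exact ⟨thresholdRel (w + w), isPartialOrderRel_thresholdRel hu.le, isCompat_thresholdRel _,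
    isThresholdOrder_thresholdRel hu, not_isTotalRel_thresholdRel hw (lt_add_of_pos_right w hw)⟩

end ThrPaper
end

section
/- Let G = (X, +, ≤) be an ordered group whose order is a semiorder and is not an antichain (some two distinct elements are comparable), and suppose G equals I(G)(0), the connected component of 0 in the incomparability graph. Then: (1) every maximal chain of (X, ≤) is order-isomorphic to the chain ℤ of integers; (2) K(G) = {0} and (X, ≤) has no infinite antichain if and only if G is isomorphic, as an ordered group, to the additive group ℤ with the order x ≤ y iff x = y or y − x ≥ a, for some integer a ≥ 1. -/
/-!
Connectivity of the incomparability graph writes every element as a sum of elements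
incomparable with `0`. By `3 ⊕ 1`-freeness, if `x < y < z` and `n` is not above `0`, then
`x + n < z`; hence a strict chain from `x` to `x + n₁ + ⋯ + nₘ` with no `nᵢ` above `0` has at
most `m` steps. So every bounded chain is finite, and a maximal chain, which is unbounded in both
directions, is a copy of `ℤ`.

For (2), `2 ⊕ 2`-freeness makes `≤_pred` total and `K(G) = {0}` makes it antisymmetric, so
`≤_pred` is a compatible linear order on `G`. The elements `g ≥_pred 0` not above `0` form an
antichain, hence a finite set; its least nonzero element `b` is the least `≤_pred`-positive
element, and some multiple of `b` escapes the set, which makes the multiples of `b` cofinal.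
Thus `k ↦ k • b` is an isomorphism `ℤ ≃ G`, and the threshold `a` is the least `k` with `0 < k • b`.
-/

namespace ThrPaper

universe u

variable {X : Type*}

def IsChainRel (le : X → X → Prop) (C : Set X) : Prop := ∀ x ∈ C, ∀ y ∈ C, le x y ∨ le y x

def IsMaxChainRel (le : X → X → Prop) (C : Set X) : Prop :=
  IsChainRel le C ∧ ∀ D : Set X, C ⊆ D → IsChainRel le D → D = C

section Order
variable {le : X → X → Prop} {x y z : X}

theorem IsPartialOrderRel.refl (hpo : IsPartialOrderRel le) (x : X) : le x x := hpo.1 x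

theorem IsPartialOrderRel.trans (hpo : IsPartialOrderRel le) (hxy : le x y) (hyz : le y z) :
    le x z :=
  hpo.2.1 x y z hxy hyz

theorem IsPartialOrderRel.antisymm (hpo : IsPartialOrderRel le) (hxy : le x y) (hyx : le y x) :
    x = y :=
  hpo.2.2 x y hxy hyx

theorem Lt.irrefl (x : X) : ¬ Lt le x x := fun h => h.2 h.1

theorem IsPartialOrderRel.lt_of_lt_of_le (hpo : IsPartialOrderRel le) (hxy : Lt le x y)
    (hyz : le y z) : Lt le x z :=
  ⟨hpo.trans hxy.1 hyz, fun hzx => hxy.2 (hpo.trans hyz hzx)⟩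

theorem IsPartialOrderRel.lt_of_le_of_lt (hpo : IsPartialOrderRel le) (hxy : le x y)
    (hyz : Lt le y z) : Lt le x z :=
  ⟨hpo.trans hxy hyz.1, fun hzx => hyz.2 (hpo.trans hzx hxy)⟩

theorem IsPartialOrderRel.lt_trans (hpo : IsPartialOrderRel le) (hxy : Lt le x y)
    (hyz : Lt le y z) : Lt le x z :=
  hpo.lt_of_lt_of_le hxy hyz.1

theorem IsPartialOrderRel.lt_of_le_of_ne (hpo : IsPartialOrderRel le) (hxy : le x y)
    (hne : x ≠ y) : Lt le x y :=
  ⟨hxy, fun hyx => hne (hpo.antisymm hxy hyx)⟩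

theorem IsPartialOrderRel.le_iff_eq_or_lt (hpo : IsPartialOrderRel le) :
    le x y ↔ x = y ∨ Lt le x y :=
  ⟨fun h => (em (x = y)).imp_right (hpo.lt_of_le_of_ne h), by
    rintro (rfl | h)
    exacts [hpo.refl x, h.1]⟩

theorem IsPartialOrderRel.flip (hpo : IsPartialOrderRel le) : IsPartialOrderRel (flip le) :=
  ⟨hpo.refl, fun _ _ _ hxy hyz => hpo.trans hyz hxy, fun _ _ hxy hyx => hpo.antisymm hyx hxy⟩

theorem lt_or_lt_of_not_embeds3p1 (hpo : IsPartialOrderRel le) (h31 : ¬ Embeds3p1 le)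
    {a b c : X} (hab : Lt le a b) (hbc : Lt le b c) (d : X) : Lt le a d ∨ Lt le d c := by
  refine or_iff_not_imp_left.2 fun had => ?_
  by_contra hdc
  have hda : ¬ le d a := fun h => hdc (hpo.lt_of_le_of_lt h (hpo.lt_trans hab hbc))
  have had' : ¬ le a d := fun h => had ⟨h, hda⟩
  have hcd : ¬ le c d := fun h => had' (hpo.trans hab.1 (hpo.trans hbc.1 h))
  have hdc' : ¬ le d c := fun h => hdc ⟨h, hcd⟩
  exact h31 ⟨a, b, c, d, hab, hbc, ⟨hda, had'⟩,
    ⟨fun h => hdc' (hpo.trans h hbc.1), fun h => had' (hpo.trans hab.1 h)⟩, ⟨hdc', hcd⟩⟩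

theorem predLe_total (hpo : IsPartialOrderRel le) (h22 : ¬ Embeds2p2 le) (x y : X) :
    PredLe le x y ∨ PredLe le y x := by
  by_contra! h
  simp only [PredLe, not_forall] at h
  obtain ⟨⟨a, hax, hay⟩, ⟨c, hcy, hcx⟩⟩ := h
  have hya : ¬ le y a := fun h => hcx (hpo.lt_trans (hpo.lt_of_lt_of_le hcy h) hax)
  have hxc : ¬ le x c := fun h => hay (hpo.lt_trans (hpo.lt_of_lt_of_le hax h) hcy)
  exact h22 ⟨a, x, c, y, hax, hcy,
    ⟨fun h => hay (hpo.lt_of_le_of_lt h hcy), fun h => hcx (hpo.lt_of_le_of_lt h hax)⟩,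
    ⟨fun h => hay ⟨h, hya⟩, hya⟩, ⟨hxc, fun h => hcx ⟨h, hxc⟩⟩,
    ⟨fun h => hay (hpo.lt_of_lt_of_le hax h), fun h => hcx (hpo.lt_of_lt_of_le hcy h)⟩⟩

theorem exists_least_of_finite (htrans : ∀ x y z, le x y → le y z → le x z)
    (htot : ∀ x y, le x y ∨ le y x) {s : Set X} (hs : s.Finite) (hne : s.Nonempty) :
    ∃ m ∈ s, ∀ x ∈ s, le m x := by
  induction s, hs using Set.Finite.induction_on with
  | empty => exact absurd hne Set.not_nonempty_empty
  | @insert a s _ _ ih =>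
    rcases s.eq_empty_or_nonempty with rfl | hs
    · exact ⟨a, Set.mem_insert a ∅, by simpa using (htot a a).elim id id⟩
    obtain ⟨m, hm, hmin⟩ := ih hs
    rcases htot a m with ham | hma
    · refine ⟨a, Set.mem_insert a s, ?_⟩
      rintro x (rfl | hx)
      · exact (htot x x).elim id id
      · exact htrans _ _ _ ham (hmin x hx)
    · refine ⟨m, Set.mem_insert_of_mem a hm, ?_⟩
      rintro x (rfl | hx)
      · exact hma
      · exact hmin x hx

noncomputable abbrev linearOrderOfChain (hpo : IsPartialOrderRel le) {C : Set X}
    (hC : IsChainRel le C) : LinearOrder C where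
  le x y := le x y
  le_refl x := hpo.refl x
  le_trans _ _ _ := hpo.trans
  le_antisymm _ _ hxy hyx := Subtype.ext (hpo.antisymm hxy hyx)
  le_total x y := hC x x.2 y y.2
  toDecidableLE := Classical.decRel _

theorem exists_int_param_of_chain (hpo : IsPartialOrderRel le) {C : Set X}
    (hC : IsChainRel le C) (hne : C.Nonempty)
    (hup : ∀ x ∈ C, ∃ y ∈ C, Lt le x y) (hdown : ∀ x ∈ C, ∃ y ∈ C, Lt le y x)
    (hfin : ∀ x ∈ C, ∀ y ∈ C, {z | z ∈ C ∧ le x z ∧ le z y}.Finite) :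
    ∃ f : ℤ → X, (∀ m n : ℤ, m ≤ n ↔ le (f m) (f n)) ∧ Set.range f = C := by
  let _ := linearOrderOfChain hpo hC
  have : Nonempty C := hne.to_subtype
  have : NoMaxOrder C := ⟨fun x => let ⟨y, hy, hxy⟩ := hup x x.2; ⟨⟨y, hy⟩, hxy⟩⟩
  have : NoMinOrder C := ⟨fun x => let ⟨y, hy, hyx⟩ := hdown x x.2; ⟨⟨y, hy⟩, hyx⟩⟩
  let _ := LocallyFiniteOrder.ofFiniteIcc fun x y : C =>
    ((hfin x x.2 y y.2).preimage Subtype.val_injective.injOn).subset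
      fun z hz => ⟨z.2, hz⟩
  let _ := LinearLocallyFiniteOrder.succOrder C
  let _ := LinearLocallyFiniteOrder.predOrder C
  let e : C ≃o ℤ := orderIsoIntOfLinearSuccPredArch
  refine ⟨fun n => e.symm n, fun m n => e.symm.le_iff_le.symm, ?_⟩
  rw [Set.range_comp' Subtype.val e.symm, e.symm.surjective.range_eq, Set.image_univ,
    Subtype.range_coe]

theorem mem_of_maximal_chain (hpo : IsPartialOrderRel le) {C : Set X}
    (hC : IsMaxChainRel le C)
    (hx : ∀ y ∈ C, le x y ∨ le y x) : x ∈ C := by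
  refine hC.2 (insert x C) (Set.subset_insert x C) ?_ ▸ Set.mem_insert x C
  rintro y (rfl | hy) z (rfl | hz)
  · exact Or.inl (hpo.refl _)
  · exact hx z hz
  · exact (hx y hy).symm
  · exact hC.1 y hy z hz

theorem nonempty_of_maximal_chain (hpo : IsPartialOrderRel le) {C : Set X}
    (hC : IsMaxChainRel le C) (x : X) :
    C.Nonempty := by
  rw [Set.nonempty_iff_ne_empty]
  rintro rfl
  have := hC.2 {x} (Set.empty_subset _) (by simp [IsChainRel, hpo.refl x])
  simp at this

theorem exists_lt_of_maximal_chain (hpo : IsPartialOrderRel le) {C : Set X}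
    (hC : IsMaxChainRel le C)
    (hX : ∀ x : X, ∃ y, Lt le x y) : ∀ x ∈ C, ∃ y ∈ C, Lt le x y := by
  intro x hx
  by_contra! h
  have hle : ∀ y ∈ C, le y x := fun y hy =>
    (hC.1 x hx y hy).elim (fun hxy => not_not.1 fun hyx => h y hy ⟨hxy, hyx⟩) id
  obtain ⟨z, hxz⟩ := hX x
  exact h z (mem_of_maximal_chain hpo hC fun y hy => Or.inr (hpo.trans (hle y hy) hxz.1)) hxz

theorem exists_gt_of_maximal_chain (hpo : IsPartialOrderRel le) {C : Set X}
    (hC : IsMaxChainRel le C)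
    (hX : ∀ x : X, ∃ y, Lt le y x) : ∀ x ∈ C, ∃ y ∈ C, Lt le y x :=
  exists_lt_of_maximal_chain hpo.flip
    ⟨fun x hx y hy => hC.1 y hy x hx, fun D hCD hD => hC.2 D hCD fun x hx y hy => hD y hy x hx⟩ hX

end Order

section Group
variable {G : Type*} [AddGroup G] {le : G → G → Prop} {x y : G}

theorem IsCompat.le_iff (hc : IsCompat le) (a b : G) :
    le (a + x + b) (a + y + b) ↔ le x y :=
  ⟨fun h => by simpa [add_assoc] using hc (-a) (-b) _ _ h, hc a b x y⟩

theorem IsCompat.lt_iff (hc : IsCompat le) (a b : G) :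
    Lt le (a + x + b) (a + y + b) ↔ Lt le x y := by
  simp only [Lt, hc.le_iff]

theorem IsCompat.lt_iff_neg_add (hc : IsCompat le) : Lt le x y ↔ Lt le 0 (-x + y) := by
  simpa using (hc.lt_iff (-x) 0 (x := x) (y := y)).symm

theorem IsCompat.incomp_iff_neg_add (hc : IsCompat le) :
    Incomp le x y ↔ Incomp le 0 (-x + y) := by
  have h0 : ∀ u v : G, le u v ↔ le (-x + u) (-x + v) := fun u v => by
    simpa using (hc.le_iff (-x) 0 (x := u) (y := v)).symm
  simp only [Incomp, h0 x y, h0 y x, neg_add_cancel]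

theorem IsCompat.predLe (hc : IsCompat le) : IsCompat (PredLe le) := by
  intro a b x y h z hz
  have hz' : Lt le (-a + z + -b) x := by
    simpa [add_assoc] using (hc.lt_iff (-a) (-b)).2 hz
  simpa [add_assoc] using (hc.lt_iff a b).2 (h _ hz')

theorem exists_gt_of_lt (hc : IsCompat le) {a b : G} (hab : Lt le a b) (x : G) :
    ∃ y, Lt le x y :=
  ⟨x + -a + b, by simpa [add_assoc] using (hc.lt_iff (x + -a) 0).2 hab⟩

theorem exists_lt_of_lt (hc : IsCompat le) {a b : G} (hab : Lt le a b) (x : G) :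
    ∃ y, Lt le y x :=
  ⟨x + -b + a, by simpa [add_assoc] using (hc.lt_iff (x + -b) 0).2 hab⟩

theorem exists_list_incomp_sum_eq (hc : IsCompat le)
    (hx : Relation.ReflTransGen (Incomp le) 0 x) :
    ∃ l : List G, (∀ n ∈ l, Incomp le 0 n) ∧ l.sum = x := by
  induction hx with
  | refl => exact ⟨[], by simp, rfl⟩
  | @tail y z _ hyz ih =>
    obtain ⟨l, hl, rfl⟩ := ih
    refine ⟨l ++ [-l.sum + z], ?_, by simp⟩
    simpa [or_imp, forall_and] using ⟨hl, hc.incomp_iff_neg_add.1 hyz⟩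

theorem length_le_of_strict_chain (hpo : IsPartialOrderRel le) (hc : IsCompat le)
    (h31 : ¬ Embeds3p1 le) (ns : List G) (hns : ∀ n ∈ ns, ¬ Lt le 0 n) :
    ∀ (k : ℕ) (x : ℕ → G), (∀ i j, i < j → j ≤ k → Lt le (x i) (x j)) →
      x k = x 0 + ns.sum → k ≤ ns.length := by
  induction ns with
  | nil =>
    intro k x hx hk
    by_contra! hk0
    exact Lt.irrefl _ (by simpa [hk] using hx 0 k hk0 le_rfl)
  | cons n ns ih =>
    rintro (_ | _ | k) x hx hk
    · simp
    · simp
    have hn : ¬ Lt le (x 0) (x 0 + n) := fun h =>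
      hns n List.mem_cons_self (by simpa using hc.lt_iff_neg_add.1 h)
    -- by `3 ⊕ 1`-freeness `x 0 + n` lies below every `x j`, `j ≥ 2`: drop `x 1` and
    -- replace `x 0` by `x 0 + n`
    have key := ih (fun m hm => hns m (List.mem_cons_of_mem n hm)) (k + 1)
      (fun i => if i = 0 then x 0 + n else x (i + 1)) ?_ (by simp [hk, add_assoc])
    · simpa using key
    rintro (_ | i) j hij hj
    · have := lt_or_lt_of_not_embeds3p1 hpo h31 (hx 0 1 one_pos (by omega))
        (hx 1 (j + 1) (by omega) (by omega)) (x 0 + n)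
      simpa [Nat.pos_iff_ne_zero.1 hij, hn] using this
    · simpa [show j ≠ 0 by omega] using hx (i + 2) (j + 1) (by omega) (by omega)

theorem finite_of_chain_of_bounded (hpo : IsPartialOrderRel le) (hc : IsCompat le)
    (h31 : ¬ Embeds3p1 le) (hconn : ∀ x : G, Relation.ReflTransGen (Incomp le) 0 x)
    {S : Set G} (hS : IsChainRel le S) {c d : G}
    (hbdd : ∀ x ∈ S, le c x ∧ le x d) : S.Finite := by
  obtain ⟨ns, hns, hsum⟩ := exists_list_incomp_sum_eq hc (hconn (-c + d))
  by_contra hinf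
  let _ := linearOrderOfChain hpo hS
  have : Infinite S := Set.infinite_coe_iff.2 hinf
  set N := ns.length + 3
  obtain ⟨t, ht⟩ := Infinite.exists_subset_card_eq S (N + 1)
  let x : ℕ → G := fun i => t.orderEmbOfFin ht ⟨min i N, by omega⟩
  have hx : ∀ i j, i < j → j ≤ N → Lt le (x i) (x j) := fun i j hij hj =>
    (t.orderEmbOfFin ht).strictMono (show min i N < min j N by omega)
  have hxS : ∀ i, le c (x i) ∧ le (x i) d := fun i => hbdd _ (Subtype.prop _)
  -- `x N = x 0 + (-x 0 + c) + (-c + d) + (-d + x N)`, and both end terms are `≤ 0`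
  have hlen := length_le_of_strict_chain hpo hc h31 ((-x 0 + c) :: ns ++ [-d + x N]) ?_ N x hx
    (by simp [hsum, add_assoc])
  · simp [N] at hlen
  simp only [List.mem_append, List.mem_cons, List.not_mem_nil, or_false]
  rintro n ((rfl | hn) | rfl)
  · exact fun h => h.2 (by simpa using hc (-x 0) 0 _ _ (hxS 0).1)
  · exact fun h => (hns n hn).1 h.1
  · exact fun h => h.2 (by simpa using hc (-d) 0 _ _ (hxS N).2)

theorem exists_int_param_of_maximal_chain (hpo : IsPartialOrderRel le) (hc : IsCompat le)
    (h31 : ¬ Embeds3p1 le) (hlt : Lt le x y)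
    (hconn : ∀ x : G, Relation.ReflTransGen (Incomp le) 0 x) {C : Set G}
    (hC : IsMaxChainRel le C) :
    ∃ f : ℤ → G, (∀ m n : ℤ, m ≤ n ↔ le (f m) (f n)) ∧ Set.range f = C :=
  exists_int_param_of_chain hpo hC.1 (nonempty_of_maximal_chain hpo hC 0)
    (exists_lt_of_maximal_chain hpo hC (exists_gt_of_lt hc hlt))
    (exists_gt_of_maximal_chain hpo hC (exists_lt_of_lt hc hlt))
    fun _ _ _ _ => finite_of_chain_of_bounded hpo hc h31 hconn
      (fun a ha b hb => hC.1 a ha.1 b hb.1) fun _ hz => hz.2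

end Group

section PredLe
variable {G : Type*} [AddGroup G] {le : G → G → Prop} {x y : G}

theorem isPartialOrderRel_predLe (hc : IsCompat le)
    (hK : {x : G | PredLe le x 0 ∧ PredLe le 0 x} = {0}) : IsPartialOrderRel (PredLe le) := by
  refine ⟨fun _ _ h => h, fun _ _ _ hxy hyz z hz => hyz z (hxy z hz), fun x y hxy hyx => ?_⟩
  have hmem : -x + y ∈ {x : G | PredLe le x 0 ∧ PredLe le 0 x} := by
    constructor
    · simpa using hc.predLe (-x) 0 _ _ hyx
    · simpa using hc.predLe (-x) 0 _ _ hxy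
  rw [hK] at hmem
  exact neg_add_eq_zero.1 hmem

theorem exists_incomp_zero (hlt : Lt le x y)
    (hconn : ∀ x : G, Relation.ReflTransGen (Incomp le) 0 x) : ∃ n, Incomp le 0 n := by
  by_contra! h
  have hzero : ∀ x : G, x = 0 := fun x => by
    induction hconn x with
    | refl => rfl
    | tail _ hyz ih => exact absurd (ih ▸ hyz) (h _)
  exact Lt.irrefl _ (hzero x ▸ hzero y ▸ hlt)

theorem incomp_of_predLe (hpo : IsPartialOrderRel le) (hc : IsCompat le)
    (hx : PredLe le 0 x) (hy : ¬ Lt le 0 y) (hxy : PredLe le x y) (hne : x ≠ y) :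
    Incomp le x y := by
  have h0 : PredLe le 0 (-x + y) := by simpa using hc.predLe (-x) 0 _ _ hxy
  have hx' : PredLe le (-x) 0 := by simpa using hc.predLe (-x) 0 _ _ hx
  have hy' : PredLe le (-x + y) y := by simpa using hc.predLe 0 y _ _ hx'
  have hnlt : ¬ Lt le x y := fun h => hy (hy' 0 (hc.lt_iff_neg_add.1 h))
  have hngt : ¬ Lt le y x := fun h => Lt.irrefl _ (h0 _ (by simpa using (hc.lt_iff (-x) 0).2 h))
  exact ⟨fun h => hnlt (hpo.lt_of_le_of_ne h hne), fun h => hngt (hpo.lt_of_le_of_ne h hne.symm)⟩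

end PredLe

section IntOfLeastPos
variable {G : Type*} [AddGroup G] {r : G → G → Prop} {b : G}

theorem zsmul_lt_zsmul (hr : IsPartialOrderRel r) (hrc : IsCompat r) (hb : Lt r 0 b)
    {k l : ℤ} (hkl : k < l) : Lt r (k • b) (l • b) := by
  have step : ∀ m : ℤ, Lt r (m • b) ((m + 1) • b) := fun m => by
    simpa [add_zsmul] using (hrc.lt_iff (m • b) 0).2 hb
  induction l, (hkl : k + 1 ≤ l) using Int.leInduction with
  | base => exact step k
  | succ l _ ih => exact hr.lt_trans ih (step l)

theorem zsmul_injective (hr : IsPartialOrderRel r) (hrc : IsCompat r) (hb : Lt r 0 b) :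
    Function.Injective fun k : ℤ => k • b := by
  intro k l (hkl : k • b = l • b)
  by_contra hne
  rcases lt_or_gt_of_ne hne with h | h
  · exact Lt.irrefl _ (hkl ▸ zsmul_lt_zsmul hr hrc hb h)
  · exact Lt.irrefl _ (hkl ▸ zsmul_lt_zsmul hr hrc hb h)

theorem sum_le_length_nsmul (hr : IsPartialOrderRel r) (hrc : IsCompat r) {c : G} :
    ∀ l : List G, (∀ n ∈ l, r n c) → r l.sum (l.length • c)
  | [], _ => by simpa using hr.refl 0
  | n :: l, h => by
    rw [List.sum_cons, List.length_cons, succ_nsmul']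
    refine hr.trans (by simpa using hrc 0 l.sum _ _ (h n List.mem_cons_self)) ?_
    simpa using hrc c 0 _ _
      (sum_le_length_nsmul hr hrc l fun m hm => h m (List.mem_cons_of_mem n hm))

theorem exists_addEquiv_int (hr : IsPartialOrderRel r) (hrc : IsCompat r) (hb : Lt r 0 b)
    (hleast : ∀ g, Lt r 0 g → r b g) (hcof : ∀ g, ∃ k : ℤ, r g (k • b)) :
    ∃ e : G ≃+ ℤ, ∀ x y, r x y ↔ e x ≤ e y := by
  have hsurj : ∀ g, ∃ k : ℤ, k • b = g := by
    intro g
    obtain ⟨m, hm⟩ := hcof g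
    obtain ⟨m', hm'⟩ := hcof (-g)
    have hbdd : ∀ k : ℤ, r (k • b) g → k ≤ m := fun k hk => not_lt.1 fun hmk =>
      Lt.irrefl _ (hr.lt_of_lt_of_le (zsmul_lt_zsmul hr hrc hb hmk) (hr.trans hk hm))
    have hlow : r ((-m') • b) g := by simpa [neg_zsmul] using hrc (-(m' • b)) g _ _ hm'
    obtain ⟨n, hn, hnmax⟩ := Int.exists_greatest_of_bdd ⟨m, hbdd⟩ ⟨-m', hlow⟩
    have h0 : r 0 (-(n • b) + g) := by simpa using hrc (-(n • b)) 0 _ _ hn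
    refine ⟨n, neg_add_eq_zero.1 (by_contra fun hne => ?_)⟩
    have := hnmax (n + 1) (by
      simpa [add_zsmul] using hrc (n • b) 0 _ _ (hleast _ (hr.lt_of_le_of_ne h0 (Ne.symm hne))))
    omega
  have hmono : ∀ k l : ℤ, r (k • b) (l • b) ↔ k ≤ l := fun k l =>
    ⟨fun h => not_lt.1 fun hlk => (zsmul_lt_zsmul hr hrc hb hlk).2 h,
      fun h => h.eq_or_lt.elim (fun hkl => hkl ▸ hr.refl _)
        fun hkl => (zsmul_lt_zsmul hr hrc hb hkl).1⟩
  let φ := AddEquiv.ofBijective (zmultiplesHom G b) ⟨zsmul_injective hr hrc hb, hsurj⟩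
  refine ⟨φ.symm, fun x y => ?_⟩
  obtain ⟨k, rfl⟩ := φ.surjective x
  obtain ⟨l, rfl⟩ := φ.surjective y
  rw [φ.symm_apply_apply, φ.symm_apply_apply]
  exact hmono k l

end IntOfLeastPos

section Threshold
variable {G : Type*} [AddGroup G] {le : G → G → Prop} {x y : G}

theorem finite_predLe_zero_not_lt (hpo : IsPartialOrderRel le) (hc : IsCompat le)
    (h22 : ¬ Embeds2p2 le)
    (hA : ¬ ∃ A : Set G, A.Infinite ∧ ∀ x ∈ A, ∀ y ∈ A, x ≠ y → Incomp le x y) :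
    {g : G | PredLe le 0 g ∧ ¬ Lt le 0 g}.Finite := by
  by_contra hinf
  refine hA ⟨_, hinf, fun x hx y hy hne => ?_⟩
  rcases predLe_total hpo h22 x y with hxy | hyx
  · exact incomp_of_predLe hpo hc hx.1 hy.2 hxy hne
  · exact (incomp_of_predLe hpo hc hy.1 hx.2 hyx hne.symm).symm

theorem exists_least_pos_predLe (hpo : IsPartialOrderRel le) (hc : IsCompat le)
    (h22 : ¬ Embeds2p2 le) (hlt : Lt le x y)
    (hconn : ∀ x : G, Relation.ReflTransGen (Incomp le) 0 x)
    (hK : {x : G | PredLe le x 0 ∧ PredLe le 0 x} = {0})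
    (hA : ¬ ∃ A : Set G, A.Infinite ∧ ∀ x ∈ A, ∀ y ∈ A, x ≠ y → Incomp le x y) :
    ∃ b, Lt (PredLe le) 0 b ∧ ∀ g, Lt (PredLe le) 0 g → PredLe le b g := by
  have htot := predLe_total hpo h22
  have hpo' := isPartialOrderRel_predLe hc hK
  have hT : {g : G | PredLe le 0 g ∧ g ≠ 0 ∧ ¬ Lt le 0 g}.Nonempty := by
    obtain ⟨n, hn⟩ := exists_incomp_zero hlt hconn
    have hn0 : n ≠ 0 := by rintro rfl; exact hn.1 (hpo.refl 0)
    rcases htot 0 n with h | h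
    · exact ⟨n, h, hn0, fun h' => hn.1 h'.1⟩
    · exact ⟨-n, by simpa using hc.predLe (-n) 0 _ _ h, neg_ne_zero.2 hn0,
        fun h' => hn.2 (by simpa using hc n 0 _ _ h'.1)⟩
  obtain ⟨b, ⟨hb0, hbne, hbnlt⟩, hbmin⟩ := exists_least_of_finite hpo'.2.1 htot
    ((finite_predLe_zero_not_lt hpo hc h22 hA).subset fun g hg => ⟨hg.1, hg.2.2⟩) hT
  refine ⟨b, hpo'.lt_of_le_of_ne hb0 hbne.symm, fun g hg => ?_⟩
  by_cases hgpos : Lt le 0 g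
  · exact (htot b g).resolve_right fun hgb => hbnlt (hgb 0 hgpos)
  · exact hbmin g ⟨hg.1, fun h => hg.2 (h ▸ hpo'.refl 0), hgpos⟩

theorem exists_predLe_zsmul (hpo : IsPartialOrderRel le) (hc : IsCompat le)
    (h22 : ¬ Embeds2p2 le) (hconn : ∀ x : G, Relation.ReflTransGen (Incomp le) 0 x)
    (hK : {x : G | PredLe le x 0 ∧ PredLe le 0 x} = {0})
    (hA : ¬ ∃ A : Set G, A.Infinite ∧ ∀ x ∈ A, ∀ y ∈ A, x ≠ y → Incomp le x y)
    {b : G} (hb : Lt (PredLe le) 0 b) (g : G) : ∃ k : ℤ, PredLe le g (k • b) := by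
  have htot := predLe_total hpo h22
  have hpo' := isPartialOrderRel_predLe hc hK
  obtain ⟨K, hKpos⟩ : ∃ K : ℤ, Lt le 0 (K • b) := by
    by_contra! h
    refine Set.infinite_range_of_injective ((zsmul_injective hpo' hc.predLe hb).comp
      (Nat.cast_injective (R := ℤ))) ((finite_predLe_zero_not_lt hpo hc h22 hA).subset ?_)
    rintro _ ⟨n, rfl⟩
    refine ⟨?_, h _⟩
    rcases n.eq_zero_or_pos with rfl | hn
    · simpa using hpo'.refl 0
    · simpa using (zsmul_lt_zsmul hpo' hc.predLe hb (Int.natCast_pos.2 hn)).1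
  obtain ⟨l, hl, rfl⟩ := exists_list_incomp_sum_eq hc (hconn g)
  refine ⟨l.length * K, ?_⟩
  rw [mul_zsmul, natCast_zsmul]
  exact sum_le_length_nsmul hpo' hc.predLe l fun n hn =>
    (htot n _).resolve_right fun h => (hl n hn).1 (h 0 hKpos).1

theorem exists_threshold_of_predLe_iff (hpo : IsPartialOrderRel le) (hc : IsCompat le)
    (hlt : Lt le x y) (e : G ≃+ ℤ) (he : ∀ x y, PredLe le x y ↔ e x ≤ e y) :
    ∃ a : ℤ, 1 ≤ a ∧ ∀ x y : G, le x y ↔ (x = y ∨ a ≤ e y - e x) := by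
  have hup : ∀ k l : ℤ, k ≤ l → Lt le 0 (e.symm k) → Lt le 0 (e.symm l) := fun k l hkl h =>
    (he _ _).2 (by simpa using hkl) 0 h
  have hpos : ∀ k : ℤ, Lt le 0 (e.symm k) → 1 ≤ k := fun k hk => by
    by_contra! h
    exact Lt.irrefl _ ((he _ 0).2 (by simp; omega) 0 hk)
  obtain ⟨a, ha, hamin⟩ := Int.exists_least_of_bdd ⟨1, hpos⟩
    ⟨e (-x + y), by simpa using hc.lt_iff_neg_add.1 hlt⟩
  refine ⟨a, hpos a ha, fun u v => ?_⟩
  have hdiff : -u + v = e.symm (e v - e u) := by simp [sub_eq_neg_add]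
  rw [hpo.le_iff_eq_or_lt, hc.lt_iff_neg_add, hdiff]
  exact or_congr_right ⟨hamin _, fun h => hup a _ h ha⟩

end Threshold

section Converse
variable {G : Type*} [AddGroup G] {le : G → G → Prop} {a : ℤ} {x y : G}

theorem lt_iff_of_threshold (ha : 1 ≤ a) (e : G ≃+ ℤ)
    (hle : ∀ x y : G, le x y ↔ (x = y ∨ a ≤ e y - e x)) : Lt le x y ↔ a ≤ e y - e x := by
  simp only [Lt, hle]
  constructor
  · rintro ⟨rfl | h, h'⟩
    exacts [absurd (Or.inl rfl) h', h]
  · rintro h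
    refine ⟨Or.inr h, ?_⟩
    rintro (rfl | h') <;> omega

theorem le_of_predLe_of_threshold (ha : 1 ≤ a) (e : G ≃+ ℤ)
    (hle : ∀ x y : G, le x y ↔ (x = y ∨ a ≤ e y - e x)) (h : PredLe le x y) : e x ≤ e y := by
  have := (lt_iff_of_threshold ha e hle).1
    (h (e.symm (e x - a)) ((lt_iff_of_threshold ha e hle).2 (by simp)))
  simp at this
  omega

theorem predLe_kernel_eq_of_threshold (ha : 1 ≤ a) (e : G ≃+ ℤ)
    (hle : ∀ x y : G, le x y ↔ (x = y ∨ a ≤ e y - e x)) :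
    {x : G | PredLe le x 0 ∧ PredLe le 0 x} = {0} := by
  ext x
  refine ⟨fun ⟨h1, h2⟩ => e.injective ?_, by rintro rfl; exact ⟨fun _ h => h, fun _ h => h⟩⟩
  have := le_of_predLe_of_threshold ha e hle h1
  have := le_of_predLe_of_threshold ha e hle h2
  simp only [map_zero] at *
  omega

theorem not_exists_infinite_antichain_of_threshold (ha : 1 ≤ a) (e : G ≃+ ℤ)
    (hle : ∀ x y : G, le x y ↔ (x = y ∨ a ≤ e y - e x)) :
    ¬ ∃ A : Set G, A.Infinite ∧ ∀ x ∈ A, ∀ y ∈ A, x ≠ y → Incomp le x y := by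
  rintro ⟨A, hinf, hA⟩
  obtain ⟨x₀, hx₀⟩ := hinf.nonempty
  refine hinf (((Set.finite_Icc (e x₀ - a) (e x₀ + a)).preimage e.injective.injOn).subset
    fun x hx => ?_)
  simp only [Set.mem_preimage, Set.mem_Icc]
  rcases eq_or_ne x x₀ with rfl | hne
  · omega
  · have hi := hA x hx x₀ hx₀ hne
    simp only [Incomp, hle, not_or] at hi
    omega

end Converse

/-- Let `G` be an ordered group whose order is a semiorder which is not
an antichain, with `G = I(G)(0)`. Then (1) every maximal chain of `(G, ≤)` is
order-isomorphic to `ℤ`; (2) `K(G) = {0}` and `G` has no infinite antichain iff `G` is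
isomorphic as an ordered group to `ℤ` with the order `x ≤ y` iff `x = y` or `y - x ≥ a`,
for some integer `a ≥ 1`. -/
theorem connected_semiordered_group_chains {G : Type*} [AddGroup G] (le : G → G → Prop)
    (hpo : IsPartialOrderRel le) (hc : IsCompat le)
    (hsemi : ¬ Embeds2p2 le ∧ ¬ Embeds3p1 le)
    (hnotantichain : ∃ x y : G, Lt le x y)
    (hconn : ∀ x : G, Relation.ReflTransGen (fun a b => Incomp le a b) 0 x) :
    -- (1) every maximal chain of `(G, ≤)` is order-isomorphic to the chain `ℤ`
    (∀ C : Set G,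
      (∀ x ∈ C, ∀ y ∈ C, le x y ∨ le y x) →
      (∀ D : Set G, C ⊆ D → (∀ x ∈ D, ∀ y ∈ D, le x y ∨ le y x) → D = C) →
      ∃ f : ℤ → G, (∀ m n : ℤ, m ≤ n ↔ le (f m) (f n)) ∧ Set.range f = C) ∧
    -- (2) `K(G) = {0}` and no infinite antichain iff `G` is the ordered group `ℤ`
    -- with a threshold order
    (({x : G | PredLe le x 0 ∧ PredLe le 0 x} = {0} ∧
        ¬ ∃ A : Set G, A.Infinite ∧ ∀ x ∈ A, ∀ y ∈ A, x ≠ y → Incomp le x y) ↔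
      ∃ a : ℤ, 1 ≤ a ∧ ∃ e : G ≃+ ℤ, ∀ x y : G, le x y ↔ (x = y ∨ a ≤ e y - e x)) := by
  obtain ⟨h22, h31⟩ := hsemi
  obtain ⟨x, y, hlt⟩ := hnotantichain
  refine ⟨fun C hC hmax => exists_int_param_of_maximal_chain hpo hc h31 hlt hconn ⟨hC, hmax⟩,
    fun ⟨hK, hA⟩ => ?_, fun ⟨a, ha, e, hle⟩ => ⟨predLe_kernel_eq_of_threshold ha e hle,
      not_exists_infinite_antichain_of_threshold ha e hle⟩⟩
  obtain ⟨b, hb, hleast⟩ := exists_least_pos_predLe hpo hc h22 hlt hconn hK hA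
  obtain ⟨e, he⟩ := exists_addEquiv_int (isPartialOrderRel_predLe hc hK) hc.predLe hb hleast
    (exists_predLe_zsmul hpo hc h22 hconn hK hA hb)
  obtain ⟨a, ha, hle⟩ := exists_threshold_of_predLe_iff hpo hc hlt e he
  exact ⟨a, ha, e, hle⟩

end ThrPaper
end
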